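/- Let X ≥ 1/2, let G : [−X, X] → [0, ∞) be continuous, let C₁ ≥ 0 and A, B > 0, and define f(s) = A·e^{s − X} + B·e^{−s − X} + (C₁/2)·∫_{−X}^{X} e^{−|s − q|}·G(q) dq for s ∈ [−X, X]. Then f(s) > 0 for every s ∈ [−X, X], and for every s ∈ [−X + 1/2, X − 1/2] one has (1/8)·(f(s + 1/2) + f(s − 1/2)) ≤ (e^{1/2}/4)·f(s) < (1/2)·f(s). -/
import Mathlib

lemma exp_half_lt_two : Real.exp (1/2) < 2 := by
  have h := Real.exp_one_lt_d9
  have hsq : Real.exp (1/2) * Real.exp (1/2) = Real.exp 1 := by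
    rw [← Real.exp_add]; norm_num
  nlinarith [Real.exp_pos (1/2 : ℝ)]

lemma key_int (X : ℝ) (hXX : -X ≤ X) (G : ℝ → ℝ) (hG : ContinuousOn G (Set.Icc (-X) X))
    (hGpos : ∀ s ∈ Set.Icc (-X) X, 0 ≤ G s) (s t : ℝ) (hst : |t - s| ≤ 1/2) :
    (∫ q in (-X)..X, Real.exp (-|t - q|) * G q) ≤
      Real.exp (1/2) * ∫ q in (-X)..X, Real.exp (-|s - q|) * G q := by
  have hint : ∀ u : ℝ, IntervalIntegrable (fun q => Real.exp (-|u - q|) * G q)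
      MeasureTheory.volume (-X) X := by
    intro u
    apply ContinuousOn.intervalIntegrable
    rw [Set.uIcc_of_le hXX]
    exact (Continuous.continuousOn (by continuity)).mul hG
  rw [← intervalIntegral.integral_const_mul]
  apply intervalIntegral.integral_mono_on hXX (hint t) ((hint s).const_mul _)
  intro q hq
  have h1 : |s - q| - |t - q| ≤ |s - q - (t - q)| := abs_sub_abs_le_abs_sub _ _
  rw [show s - q - (t - q) = s - t by ring] at h1
  have h2 : |s - t| = |t - s| := abs_sub_comm _ _
  have hexp : Real.exp (-|t - q|) ≤ Real.exp (1/2) * Real.exp (-|s - q|) := by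
    rw [← Real.exp_add]
    apply Real.exp_le_exp.mpr
    linarith
  have := mul_le_mul_of_nonneg_right hexp (hGpos q hq)
  linarith [this]

/-- The explicit solutions `f_{A,B}` of `f'' - f = -C₁·G` with `A, B > 0`, `C₁ ≥ 0`, `G ≥ 0`
are positive and satisfy `(1/8)(f(s+1/2)+f(s-1/2)) ≤ (e^{1/2}/4) f(s) < (1/2) f(s)`. -/
theorem explicit_solution_subsolution (X : ℝ) (hX : 1/2 ≤ X) (G : ℝ → ℝ)
    (hG : ContinuousOn G (Set.Icc (-X) X))
    (hGpos : ∀ s ∈ Set.Icc (-X) X, 0 ≤ G s)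
    (C₁ : ℝ) (hC₁ : 0 ≤ C₁) (A B : ℝ) (hA : 0 < A) (hB : 0 < B)
    (f : ℝ → ℝ)
    (hf : ∀ s, f s = A * Real.exp (s - X) + B * Real.exp (-s - X)
        + (C₁ / 2) * ∫ q in (-X)..X, Real.exp (-|s - q|) * G q) :
    (∀ s ∈ Set.Icc (-X) X, 0 < f s) ∧
    (∀ s ∈ Set.Icc (-X + 1/2) (X - 1/2),
      (1/8) * (f (s + 1/2) + f (s - 1/2)) ≤ (Real.exp (1/2) / 4) * f s ∧
      (Real.exp (1/2) / 4) * f s < (1/2) * f s) := by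
  have hXX : -X ≤ X := by linarith
  have hI : ∀ t : ℝ, 0 ≤ ∫ q in (-X)..X, Real.exp (-|t - q|) * G q := by
    intro t
    apply intervalIntegral.integral_nonneg hXX
    intro q hq
    exact mul_nonneg (Real.exp_pos _).le (hGpos q hq)
  have hfpos : ∀ s : ℝ, 0 < f s := by
    intro s
    rw [hf]
    have h1 := mul_pos hA (Real.exp_pos (s - X))
    have h2 := mul_pos hB (Real.exp_pos (-s - X))
    have h3 : 0 ≤ (C₁ / 2) * ∫ q in (-X)..X, Real.exp (-|s - q|) * G q :=
      mul_nonneg (by linarith) (hI s)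
    linarith
  refine ⟨fun s _ => hfpos s, fun s _ => ?_⟩
  constructor
  · have hI1 := key_int X hXX G hG hGpos s (s + 1/2) (le_of_eq (by rw [show s + 1/2 - s = 1/2 by ring]; exact abs_of_nonneg (by norm_num)))
    have hI2 := key_int X hXX G hG hGpos s (s - 1/2) (le_of_eq (by rw [show s - 1/2 - s = -(1/2) by ring, abs_neg]; exact abs_of_nonneg (by norm_num)))
    have e1 : Real.exp (s + 1/2 - X) = Real.exp (s - X) * Real.exp (1/2) := by
      rw [← Real.exp_add]; ring_nf
    have e2 : Real.exp (s - 1/2 - X) = Real.exp (s - X) * Real.exp (-(1/2)) := by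
      rw [← Real.exp_add]; ring_nf
    have e3 : Real.exp (-(s + 1/2) - X) = Real.exp (-s - X) * Real.exp (-(1/2)) := by
      rw [← Real.exp_add]; ring_nf
    have e4 : Real.exp (-(s - 1/2) - X) = Real.exp (-s - X) * Real.exp (1/2) := by
      rw [← Real.exp_add]; ring_nf
    have h5 : Real.exp (-(1/2)) ≤ Real.exp (1/2) := Real.exp_le_exp.mpr (by norm_num)
    rw [hf (s + 1/2), hf (s - 1/2), hf s, e1, e2, e3, e4]
    have p1 : A * Real.exp (s - X) * Real.exp (-(1/2)) ≤ A * Real.exp (s - X) * Real.exp (1/2) :=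
      mul_le_mul_of_nonneg_left h5 (mul_pos hA (Real.exp_pos _)).le
    have p2 : B * Real.exp (-s - X) * Real.exp (-(1/2)) ≤ B * Real.exp (-s - X) * Real.exp (1/2) :=
      mul_le_mul_of_nonneg_left h5 (mul_pos hB (Real.exp_pos _)).le
    have p3 := mul_le_mul_of_nonneg_left hI1 (show (0:ℝ) ≤ C₁/2 by linarith)
    have p4 := mul_le_mul_of_nonneg_left hI2 (show (0:ℝ) ≤ C₁/2 by linarith)
    nlinarith [p1, p2, p3, p4]
  · have := hfpos s
    have h2 : Real.exp (1/2) / 4 < 1/2 := by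
      have := exp_half_lt_two; linarith
    exact mul_lt_mul_of_pos_right h2 this
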